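/- As formal power series (or for |q| < 1 and |z| < 1), Σ_{l≥0} ((a;q)_l / (q;q)_l) z^l = (az;q)_∞ / (z;q)_∞. -/

import Mathlib

/-!
With `c l = (a;q)_l / (q;q)_l`, the relation `c (l+1) (1 - q^(l+1)) = c l (1 - a q^l)` gives the
functional equation `(1 - w) F(w) = (1 - a w) F(q w)` for `F(w) = ∑ c l w^l`. Iterating it,
`(z;q)_n F(z) = (az;q)_n F(q^n z)`. The coefficients converge to `(a;q)_∞ / (q;q)_∞`, so they are
bounded, `F` is continuous at `0` with `F(0) = 1`, and letting `n → ∞` gives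
`(z;q)_∞ F(z) = (az;q)_∞`.
-/

open scoped BigOperators

/-- The finite q-Pochhammer symbol `(a;q)_n`. -/
noncomputable def qPoch (a q : ℂ) : ℕ → ℂ
  | 0 => 1
  | n + 1 => qPoch a q n * (1 - a * q ^ n)

/-- The infinite q-Pochhammer symbol `(a;q)_∞`. -/
noncomputable def qPochInf (a q : ℂ) : ℂ := ∏' i : ℕ, (1 - a * q ^ i)

open Filter Topology Finset

section BoundedCoefficients

variable {𝕜 : Type*} [NormedField 𝕜] [CompleteSpace 𝕜] {c : ℕ → 𝕜} {M : ℝ}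

lemma summable_mul_pow_of_norm_le (hc : ∀ l, ‖c l‖ ≤ M) {w : 𝕜} (hw : ‖w‖ < 1) :
    Summable fun l => c l * w ^ l :=
  .of_norm_bounded ((summable_geometric_of_lt_one (norm_nonneg w) hw).mul_left M) fun l => by
    rw [norm_mul, norm_pow]
    exact mul_le_mul_of_nonneg_right (hc l) (by positivity)

lemma tendsto_tsum_mul_pow_nhds_zero (hc : ∀ l, ‖c l‖ ≤ M) :
    Tendsto (fun w => ∑' l, c l * w ^ l) (𝓝 0) (𝓝 (c 0)) := by
  have hlim (l : ℕ) : Tendsto (fun w : 𝕜 => c l * w ^ l) (𝓝 0) (𝓝 (c l * 0 ^ l)) :=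
    ((continuous_pow l).tendsto 0).const_mul (c l)
  have hbound : ∀ᶠ w : 𝕜 in 𝓝 0, ∀ l, ‖c l * w ^ l‖ ≤ M * (1 / 2) ^ l := by
    filter_upwards [Metric.closedBall_mem_nhds (0 : 𝕜) one_half_pos] with w hw l
    rw [mem_closedBall_zero_iff] at hw
    rw [norm_mul, norm_pow]
    exact mul_le_mul (hc l) (by gcongr) (by positivity) ((norm_nonneg _).trans (hc 0))
  have hsum0 : ∑' l, c l * (0 : 𝕜) ^ l = c 0 := by
    rw [tsum_eq_single 0 fun l hl => by simp [hl]]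
    simp
  exact hsum0 ▸ tendsto_tsum_of_dominated_convergence (summable_geometric_two.mul_left M) hlim hbound

end BoundedCoefficients

lemma qPoch_eq_prod (a q : ℂ) (n : ℕ) : qPoch a q n = ∏ i ∈ range n, (1 - a * q ^ i) := by
  induction n with
  | zero => rfl
  | succ n ih => rw [qPoch, ih, prod_range_succ]

lemma summable_norm_mul_pow {q : ℂ} (hq : ‖q‖ < 1) (a : ℂ) :
    Summable fun i : ℕ => ‖a * q ^ i‖ := by
  simpa [norm_mul, norm_pow] using (summable_geometric_of_lt_one (norm_nonneg q) hq).mul_left ‖a‖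

lemma one_sub_mul_pow_ne_zero {a q : ℂ} (hq : ‖q‖ ≤ 1) (ha : ‖a‖ < 1) (i : ℕ) :
    1 - a * q ^ i ≠ 0 := by
  have : ‖a * q ^ i‖ < 1 := by
    rw [norm_mul, norm_pow]
    exact (mul_le_of_le_one_right (norm_nonneg a) (pow_le_one₀ (norm_nonneg q) hq)).trans_lt ha
  exact sub_ne_zero.mpr fun h => by simp [← h] at this

lemma qPoch_ne_zero {a q : ℂ} (hq : ‖q‖ ≤ 1) (ha : ‖a‖ < 1) (n : ℕ) : qPoch a q n ≠ 0 := by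
  rw [qPoch_eq_prod]
  exact prod_ne_zero_iff.mpr fun i _ => one_sub_mul_pow_ne_zero hq ha i

lemma multipliable_one_sub_mul_pow {q : ℂ} (hq : ‖q‖ < 1) (a : ℂ) :
    Multipliable fun i : ℕ => 1 - a * q ^ i := by
  simpa [sub_eq_add_neg] using
    multipliable_one_add_of_summable (f := fun i : ℕ => -(a * q ^ i))
      (by simpa using summable_norm_mul_pow hq a)

lemma tendsto_qPoch {q : ℂ} (hq : ‖q‖ < 1) (a : ℂ) :
    Tendsto (qPoch a q) atTop (𝓝 (qPochInf a q)) := by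
  rw [funext (qPoch_eq_prod a q)]
  exact (multipliable_one_sub_mul_pow hq a).hasProd.tendsto_prod_nat

lemma qPochInf_ne_zero {a q : ℂ} (hq : ‖q‖ < 1) (ha : ‖a‖ < 1) : qPochInf a q ≠ 0 := by
  simpa [qPochInf, sub_eq_add_neg] using
    tprod_one_add_ne_zero_of_summable (f := fun i : ℕ => -(a * q ^ i))
      (fun i => by simpa [← sub_eq_add_neg] using one_sub_mul_pow_ne_zero hq.le ha i)
      (by simpa using summable_norm_mul_pow hq a)

lemma exists_norm_qPoch_div_qPoch_le {q : ℂ} (hq : ‖q‖ < 1) (a : ℂ) :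
    ∃ M, ∀ l, ‖qPoch a q l / qPoch q q l‖ ≤ M := by
  have hlim := (tendsto_qPoch hq a).div (tendsto_qPoch hq q) (qPochInf_ne_zero hq hq)
  obtain ⟨M, hM⟩ := isBounded_iff_forall_norm_le.mp (Metric.isBounded_range_of_tendsto _ hlim)
  exact ⟨M, fun l => hM _ (Set.mem_range_self l)⟩

lemma qPoch_div_qPoch_succ_mul {q : ℂ} (hq : ‖q‖ < 1) (a : ℂ) (l : ℕ) :
    qPoch a q (l + 1) / qPoch q q (l + 1) * (1 - q ^ (l + 1)) =
      qPoch a q l / qPoch q q l * (1 - a * q ^ l) := by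
  have h1 := qPoch_ne_zero hq.le hq l
  have h2 : 1 - q ^ (l + 1) ≠ 0 := pow_succ' q l ▸ one_sub_mul_pow_ne_zero hq.le hq l
  rw [qPoch, qPoch, ← pow_succ']
  field_simp

noncomputable def qBinomialSeries (a q w : ℂ) : ℂ := ∑' l : ℕ, qPoch a q l / qPoch q q l * w ^ l

lemma tendsto_qBinomialSeries_nhds_zero {q : ℂ} (hq : ‖q‖ < 1) (a : ℂ) :
    Tendsto (qBinomialSeries a q) (𝓝 0) (𝓝 1) := by
  obtain ⟨M, hM⟩ := exists_norm_qPoch_div_qPoch_le hq a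
  have := tendsto_tsum_mul_pow_nhds_zero hM
  rwa [show qPoch a q 0 / qPoch q q 0 = 1 by simp [qPoch]] at this

lemma one_sub_mul_qBinomialSeries {q : ℂ} (hq : ‖q‖ < 1) (a : ℂ) {w : ℂ} (hw : ‖w‖ < 1) :
    (1 - w) * qBinomialSeries a q w = (1 - a * w) * qBinomialSeries a q (q * w) := by
  obtain ⟨M, hM⟩ := exists_norm_qPoch_div_qPoch_le hq a
  have hqw : ‖q * w‖ < 1 := by
    rw [norm_mul]
    exact (mul_le_of_le_one_left (norm_nonneg w) hq.le).trans_lt hw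
  set c := fun l => qPoch a q l / qPoch q q l
  have hF : HasSum (fun l => c l * w ^ l) (qBinomialSeries a q w) :=
    (summable_mul_pow_of_norm_le hM hw).hasSum
  have hG : HasSum (fun l => c l * (q * w) ^ l) (qBinomialSeries a q (q * w)) :=
    (summable_mul_pow_of_norm_le hM hqw).hasSum
  have hdiff : HasSum (fun l => c l * (1 - q ^ l) * w ^ l)
      (qBinomialSeries a q w - qBinomialSeries a q (q * w)) :=
    (hF.sub hG).congr_fun fun l => by ring
  have hshift : HasSum (fun l => w * (c l * w ^ l - a * (c l * (q * w) ^ l)))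
      (qBinomialSeries a q w - qBinomialSeries a q (q * w)) := by
    -- the `l = 0` term of `hdiff` vanishes, so the sum can be reindexed from `l + 1`
    have := (hasSum_nat_add_iff' 1).mpr hdiff
    simp only [range_one, sum_singleton, pow_zero, sub_self, mul_zero, zero_mul, sub_zero] at this
    refine this.congr_fun fun l => ?_
    simp only [c]
    rw [qPoch_div_qPoch_succ_mul hq a l]
    ring
  linear_combination hshift.unique ((hF.sub (hG.mul_left a)).mul_left w)

lemma qPoch_mul_qBinomialSeries {q : ℂ} (hq : ‖q‖ < 1) (a : ℂ) {z : ℂ} (hz : ‖z‖ < 1) (n : ℕ) :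
    qPoch z q n * qBinomialSeries a q z = qPoch (a * z) q n * qBinomialSeries a q (q ^ n * z) := by
  induction n with
  | zero => simp [qPoch]
  | succ n ih =>
    have hw : ‖q ^ n * z‖ < 1 := by
      rw [norm_mul, norm_pow]
      exact (mul_le_of_le_one_left (norm_nonneg z) (pow_le_one₀ (norm_nonneg q) hq.le)).trans_lt hz
    rw [qPoch, qPoch, pow_succ', mul_assoc q]
    linear_combination (1 - z * q ^ n) * ih +
      qPoch (a * z) q n * one_sub_mul_qBinomialSeries hq a hw

/-- The q-binomial theorem. -/
theorem stmt2 (a q z : ℂ) (hq : ‖q‖ < 1) (hz : ‖z‖ < 1) :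
    ∑' l : ℕ, (qPoch a q l / qPoch q q l) * z ^ l =
      qPochInf (a * z) q / qPochInf z q := by
  have hseries : Tendsto (fun n => qBinomialSeries a q (q ^ n * z)) atTop (𝓝 1) :=
    (tendsto_qBinomialSeries_nhds_zero hq a).comp <| by
      simpa using (tendsto_pow_atTop_nhds_zero_of_norm_lt_one hq).mul_const z
  have hlim := tendsto_nhds_unique
    (((tendsto_qPoch hq z).mul_const (qBinomialSeries a q z)).congr
      (qPoch_mul_qBinomialSeries hq a hz))
    ((tendsto_qPoch hq (a * z)).mul hseries)
  rw [show ∑' l : ℕ, (qPoch a q l / qPoch q q l) * z ^ l = qBinomialSeries a q z from rfl,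
    eq_div_iff (qPochInf_ne_zero hq hz)]
  linear_combination hlim
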